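/- Let N_+ = N ∪ {n+1} and let 𝒫^{N_+} be the lattice of partitions of N_+ ordered by coarsening. Define f : ℰ^N → 𝒫^{N_+} by: if A ≠ ∅ and P = {A, B_1, …, B_{|P|−1}}, then f(A,P) = {A ∪ {n+1}, B_1, …, B_{|P|−1}}; and if A = ∅ and P = {B_1, …, B_{|P|}}, then f(∅,P) = {{n+1}, B_1, …, B_{|P|}}. Then f is a lattice isomorphism from ℰ^N onto 𝒫^{N_+}: f is a bijection and for all (A,P),(B,Q) ∈ ℰ^N, f((A,P) ⊓ (B,Q)) = f(A,P) ∧ f(B,Q) and f(cl((A,P) ⊔ (B,Q))) = f(A,P) ∨ f(B,Q). -/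

import Mathlib

open scoped BigOperators

/-- `modp n A` is the modular partition `P^A_⊥` of `Fin n` whose unique (possibly)
non-singleton block is `A`, all other blocks being singletons. -/
def modp (n : ℕ) (A : Set (Fin n)) : Setoid (Fin n) where
  r x y := x = y ∨ (x ∈ A ∧ y ∈ A)
  iseqv := by
    refine ⟨fun _ => Or.inl rfl, ?_, ?_⟩
    · rintro x y (rfl | ⟨hx, hy⟩)
      · exact Or.inl rfl
      · exact Or.inr ⟨hy, hx⟩
    · rintro x y z (rfl | ⟨hx, hy⟩) h
      · exact h
      · rcases h with rfl | ⟨hy', hz⟩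
        · exact Or.inr ⟨hx, hy⟩
        · exact Or.inr ⟨hx, hz⟩

/-- The product `X^N = 2^N × 𝒫^N` of the subset lattice and the partition lattice,
ordered componentwise. -/
abbrev XN (n : ℕ) := Set (Fin n) × Setoid (Fin n)

/-- The closure operator `cl` on `X^N`:  `cl(∅,P) = (∅,P)` and, for `A ≠ ∅`,
`cl(A,P) = (Ā, P ⊔ P^A_⊥)` where `Ā` is the block of `P ⊔ P^A_⊥` containing `A`. -/
def EmbClosure (n : ℕ) (x : XN n) : XN n :=
  ({y | ∃ a ∈ x.1, (x.2 ⊔ modp n x.1) y a}, x.2 ⊔ modp n x.1)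

/-- An embedded subset is a pair that coincides with its closure. -/
def IsEmbedded (n : ℕ) (x : XN n) : Prop := EmbClosure n x = x

/-- The lattice `ℰ^N` of embedded subsets, with the induced order. -/
abbrev Emb (n : ℕ) := {x : XN n // IsEmbedded n x}

lemma modp_le_of_subsingleton {n : ℕ} {A : Set (Fin n)} (h : A.Subsingleton)
    (Q : Setoid (Fin n)) : modp n A ≤ Q := by
  rw [Setoid.le_def]
  intro x y hxy
  rcases hxy with rfl | ⟨hx, hy⟩
  · exact Q.refl' x
  · obtain rfl := h hx hy
    exact Q.refl' x

lemma modp_eq_bot_of_subsingleton {n : ℕ} {A : Set (Fin n)} (h : A.Subsingleton) :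
    modp n A = ⊥ :=
  le_antisymm (modp_le_of_subsingleton h ⊥) bot_le

lemma embedded_empty (n : ℕ) (Q : Setoid (Fin n)) : IsEmbedded n (∅, Q) := by
  unfold IsEmbedded EmbClosure
  refine Prod.ext ?_ ?_
  · simp
  · simpa using sup_eq_left.mpr (modp_le_of_subsingleton Set.subsingleton_empty Q)

lemma embedded_univ_top (n : ℕ) : IsEmbedded n (Set.univ, ⊤) := by
  unfold IsEmbedded EmbClosure
  refine Prod.ext ?_ ?_
  · ext y
    simp only [Set.mem_setOf_eq, Set.mem_univ, iff_true]
    exact ⟨y, trivial, Setoid.refl' _ y⟩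
  · exact sup_eq_left.mpr le_top

lemma embedded_singleton (n : ℕ) (i : Fin n) : IsEmbedded n ({i}, ⊥) := by
  have hb : modp n ({i} : Set (Fin n)) = ⊥ :=
    modp_eq_bot_of_subsingleton Set.subsingleton_singleton
  unfold IsEmbedded EmbClosure
  refine Prod.ext ?_ ?_
  · ext y
    simp only [Set.mem_setOf_eq, hb, sup_idem, Set.mem_singleton_iff]
    constructor
    · rintro ⟨a, ha, hrel⟩
      change (⊥ ⊔ modp n ({i} : Set (Fin n))) y a at hrel
      rw [hb, sup_idem] at hrel
      subst ha
      first | exact hrel | simpa [Setoid.bot_def] using hrel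
    · rintro rfl
      exact ⟨y, rfl, Setoid.refl' _ y⟩
  · simp [hb]

/-- The bottom element `(∅, P_⊥)` of `ℰ^N`. -/
def botE (n : ℕ) : Emb n := ⟨(∅, ⊥), embedded_empty n ⊥⟩

/-- The top element `(N, P^⊤)` of `ℰ^N`. -/
def topE (n : ℕ) : Emb n := ⟨(Set.univ, ⊤), embedded_univ_top n⟩

/-- The atom `({i}, P_⊥)` of `ℰ^N`. -/
def atomS (n : ℕ) (i : Fin n) : Emb n := ⟨({i}, ⊥), embedded_singleton n i⟩

/-- The atom `(∅, [ij])` of `ℰ^N`, where `[ij]` is the atom of the partition lattice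
whose unique non-singleton block is the pair `{i, j}`. -/
def atomP (n : ℕ) (i j : Fin n) : Emb n := ⟨(∅, modp n {i, j}), embedded_empty n _⟩

/-- A pair is an atom candidate: of the form `({i},P_⊥)` or `(∅,[ij])` with `i ≠ j`. -/
def IsAtomPair (n : ℕ) (a : XN n) : Prop :=
  (∃ i : Fin n, a = ({i}, ⊥)) ∨ ∃ i j : Fin n, i ≠ j ∧ a = (∅, modp n {i, j})

/-- The number of blocks `|P|` of a partition. -/
noncomputable def numBlocks {α : Type*} (P : Setoid α) : ℕ := P.classes.ncard

/-- The rank function `r(A,P) = (n − |P|) + min{|A|,1}` of `ℰ^N`. -/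
noncomputable def erank (n : ℕ) (x : XN n) : ℕ := (n - numBlocks x.2) + min x.1.ncard 1

/-- The partition `Q^S` of `S` induced by a partition `Q` of `N`. -/
def indPart {n : ℕ} (S : Set (Fin n)) (Q : Setoid (Fin n)) : Setoid S :=
  Setoid.comap Subtype.val Q

/-- `mu` is the Möbius function of the (finite) poset `α`. -/
def IsMobius {α : Type*} [PartialOrder α] (mu : α → α → ℤ) : Prop :=
  (∀ x, mu x x = 1) ∧
  (∀ x y, ¬x ≤ y → mu x y = 0) ∧
  (∀ x y, x < y → mu x y = -∑ᶠ z ∈ Set.Ico x y, mu x z)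

def liftS (n : ℕ) (P : Setoid (Fin n)) : Setoid (Fin (n + 1)) where
  r a b := a = b ∨ ∃ a' b' : Fin n, a = a'.castSucc ∧ b = b'.castSucc ∧ P a' b'
  iseqv := by
    refine ⟨fun _ => Or.inl rfl, ?_, ?_⟩
    · rintro a b (rfl | ⟨a', b', rfl, rfl, h⟩)
      · exact Or.inl rfl
      · exact Or.inr ⟨b', a', rfl, rfl, P.symm' h⟩
    · rintro a b c (rfl | ⟨a', b', rfl, rfl, h⟩) h2
      · exact h2
      · rcases h2 with rfl | ⟨b'', c', hb, rfl, h'⟩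
        · exact Or.inr ⟨a', b', rfl, rfl, h⟩
        · obtain rfl := Fin.castSucc_injective _ hb
          exact Or.inr ⟨a', c', rfl, rfl, P.trans' h h'⟩

def fX (n : ℕ) (x : XN n) : Setoid (Fin (n + 1)) :=
  liftS n x.2 ⊔ modp (n + 1) (Fin.castSucc '' x.1 ∪ {Fin.last n})

/-! `fX` is the lower adjoint of the Galois connection whose upper adjoint `gX` sends a
partition `R` of `N_+` to the pair (elements of `N` in the block of `n+1`, restriction of `R`
to `N`). As `fX ∘ gX = id`, `fX` is an order isomorphism from the range of `gX` onto
`𝒫^{N_+}` carrying meets to meets, and this range consists exactly of the embedded subsets: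
an embedded `(A, P)` is `gX` of the partition gluing `n+1` to the block `A` of `P`.
Joins are preserved because `fX` preserves joins and `fX (cl z) = fX z`. -/

section

variable {m n : ℕ}

lemma modp_le_iff {A : Set (Fin m)} {R : Setoid (Fin m)} :
    modp m A ≤ R ↔ ∀ u ∈ A, ∀ v ∈ A, R u v := by
  refine ⟨fun h u hu v hv => h (Or.inr ⟨hu, hv⟩), fun h u v => ?_⟩
  rintro (rfl | ⟨hu, hv⟩)
  exacts [R.refl' u, h u hu v hv]

lemma modp_union_singleton_le_iff {A : Set (Fin m)} {c : Fin m} {R : Setoid (Fin m)} :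
    modp m (A ∪ {c}) ≤ R ↔ ∀ u ∈ A, R u c := by
  rw [modp_le_iff]
  refine ⟨fun h u hu => h u (.inl hu) c (.inr rfl), fun h u hu v hv => ?_⟩
  have hc : ∀ w ∈ A ∪ {c}, R w c := by
    rintro w (hw | rfl)
    exacts [h w hw, R.refl' w]
  exact R.trans' (hc u hu) (R.symm' (hc v hv))

lemma liftS_le_iff {P : Setoid (Fin n)} {R : Setoid (Fin (n + 1))} :
    liftS n P ≤ R ↔ P ≤ R.comap Fin.castSucc := by
  refine ⟨fun h a b hab => h (Or.inr ⟨a, b, rfl, rfl, hab⟩), fun h => ?_⟩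
  rintro a b (rfl | ⟨a, b, rfl, rfl, hab⟩)
  exacts [R.refl' a, h hab]

def gX (n : ℕ) (R : Setoid (Fin (n + 1))) : XN n :=
  ({i | R i.castSucc (Fin.last n)}, R.comap Fin.castSucc)

lemma gc_fX_gX : GaloisConnection (fX n) (gX n) := fun x R => by
  rw [fX, sup_le_iff, liftS_le_iff, modp_union_singleton_le_iff, Set.forall_mem_image,
    Prod.le_def, and_comm]
  rfl

lemma fX_rel_castSucc {x : XN n} {a b : Fin n} (h : x.2 a b) :
    fX n x a.castSucc b.castSucc :=
  (gc_fX_gX.le_u_l x).2 h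

lemma fX_rel_last {x : XN n} {a : Fin n} (h : a ∈ x.1) : fX n x a.castSucc (Fin.last n) :=
  (gc_fX_gX.le_u_l x).1 h

lemma fX_gX (R : Setoid (Fin (n + 1))) : fX n (gX n R) = R := by
  refine le_antisymm (gc_fX_gX.l_u_le R) fun a b hab => ?_
  induction a using Fin.lastCases <;> induction b using Fin.lastCases
  · exact (fX n _).refl' _
  · exact (fX n _).symm' (fX_rel_last (R.symm' hab))
  · exact fX_rel_last hab
  · exact fX_rel_castSucc hab

lemma le_embClosure (x : XN n) : x ≤ EmbClosure n x :=
  ⟨fun a ha => ⟨a, ha, Setoid.refl' _ a⟩, le_sup_left⟩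

lemma embClosure_le_gX_fX (x : XN n) : EmbClosure n x ≤ gX n (fX n x) := by
  have hP : x.2 ⊔ modp n x.1 ≤ (fX n x).comap Fin.castSucc :=
    sup_le (gc_fX_gX.le_u_l x).2 (modp_le_iff.2 fun u hu v hv =>
      (fX n x).trans' (fX_rel_last hu) ((fX n x).symm' (fX_rel_last hv)))
  exact ⟨fun y ⟨a, ha, hya⟩ => (fX n x).trans' (hP hya) (fX_rel_last ha), hP⟩

lemma fX_embClosure (x : XN n) : fX n (EmbClosure n x) = fX n x :=
  le_antisymm (gc_fX_gX.l_le (embClosure_le_gX_fX x)) (gc_fX_gX.monotone_l (le_embClosure x))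

lemma isEmbedded_gX (R : Setoid (Fin (n + 1))) : IsEmbedded n (gX n R) :=
  le_antisymm (by simpa only [fX_gX] using embClosure_le_gX_fX (gX n R))
    (le_embClosure _)

lemma IsEmbedded.rel_of_mem {x : XN n} (h : IsEmbedded n x) {a b : Fin n}
    (ha : a ∈ x.1) (hb : b ∈ x.1) : x.2 a b :=
  sup_eq_left.1 (congrArg Prod.snd h) (Or.inr ⟨ha, hb⟩)

lemma IsEmbedded.mem_of_rel {x : XN n} (h : IsEmbedded n x) {a b : Fin n}
    (ha : a ∈ x.1) (hba : x.2 b a) : b ∈ x.1 :=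
  congrArg Prod.fst h ▸ ⟨a, ha, (le_sup_left : x.2 ≤ _) hba⟩

lemma IsEmbedded.exists_gX_eq {x : XN n} (h : IsEmbedded n x) : ∃ R, gX n R = x := by
  classical
  let label : Fin (n + 1) → Option (Quotient x.2) :=
    Fin.snoc (fun i => if i ∈ x.1 then none else some ⟦i⟧) none
  refine ⟨Setoid.ker label, Prod.ext (Set.ext fun i => ?_) (Setoid.ext fun a b => ?_)⟩
  · change label i.castSucc = label (Fin.last n) ↔ i ∈ x.1
    simp [label]
  · change label a.castSucc = label b.castSucc ↔ x.2 a b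
    simp only [label, Fin.snoc_castSucc]
    by_cases ha : a ∈ x.1 <;> by_cases hb : b ∈ x.1 <;>
      simp only [ha, hb, ↓reduceIte, reduceCtorEq, true_iff, false_iff, Option.some.injEq,
        Quotient.eq]
    · exact h.rel_of_mem ha hb
    · exact fun hab => hb (h.mem_of_rel ha (x.2.symm' hab))
    · exact fun hab => ha (h.mem_of_rel hb hab)

lemma IsEmbedded.gX_fX {x : XN n} (h : IsEmbedded n x) : gX n (fX n x) = x := by
  obtain ⟨R, rfl⟩ := h.exists_gX_eq
  exact gc_fX_gX.u_l_u_eq_u R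

end

theorem iso_with_partitions_general (n : ℕ) :
    Function.Bijective (fun x : Emb n => fX n x.val) ∧
    (∀ x y : Emb n, fX n (x.val ⊓ y.val) = fX n x.val ⊓ fX n y.val) ∧
    (∀ x y : Emb n, fX n (EmbClosure n (x.val ⊔ y.val)) = fX n x.val ⊔ fX n y.val) := by
  refine ⟨⟨fun x y hxy => ?_, fun R => ⟨⟨gX n R, isEmbedded_gX R⟩, fX_gX R⟩⟩,
    fun x y => ?_, fun x y => ?_⟩
  · rw [Subtype.ext_iff, ← x.2.gX_fX, ← y.2.gX_fX]
    exact congrArg (gX n) hxy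
  · calc fX n (x.val ⊓ y.val)
        = fX n (gX n (fX n x.val ⊓ fX n y.val)) := by rw [gc_fX_gX.u_inf, x.2.gX_fX, y.2.gX_fX]
      _ = fX n x.val ⊓ fX n y.val := fX_gX _
  · rw [fX_embClosure, gc_fX_gX.l_sup]

theorem iso_with_partitions (n : ℕ) (hn : 1 ≤ n) :
    Function.Bijective (fun x : Emb n => fX n x.val) ∧
    (∀ x y : Emb n, fX n (x.val ⊓ y.val) = fX n x.val ⊓ fX n y.val) ∧
    (∀ x y : Emb n, fX n (EmbClosure n (x.val ⊔ y.val)) = fX n x.val ⊔ fX n y.val) :=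
  iso_with_partitions_general n
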